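/- For q = 0 and n > m ≥ 0, 1 ≤ p ≤ n: ∑_{r=1}^{n} (-1)^r * C(r - 1, p - 1) * h_m(n, 0, r) = C(n - 1, p - 1) * [(-1)^m * C(n - p - 1, m - p) - C(n - p - 1, n - 1)], where h_m(n, 0, r) = C(n - 1, r - 1) if r ≤ m and 0 if r > m. -/

import Mathlib

/-!
Only the terms with `r ≤ m` survive, and `C(n-1, r-1) C(r-1, p-1) = C(n-1, p-1) C(n-p, r-p)`
pulls the factor `C(n-1, p-1)` out of the sum. What remains is a partial alternating sum of
the row `C(n-p, ·)`, which telescopes by Pascal's rule to `± C(n-p-1, m-p)`. The term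
`C(n-p-1, n-1)` vanishes because `p ≥ 1`.
-/

/-- Integer-valued binomial coefficient with the convention `C(a, b) = 0` when `b < 0`
or `b > a`. -/
def chZ (a b : ℤ) : ℤ := if 0 ≤ b ∧ b ≤ a then (a.toNat.choose b.toNat : ℤ) else 0

open Finset

lemma chZ_natCast (a b : ℕ) : chZ a b = a.choose b := by
  unfold chZ
  split_ifs with h
  · simp
  · rw [Nat.choose_eq_zero_of_lt (by omega), Nat.cast_zero]

lemma chZ_of_neg {a b : ℤ} (hb : b < 0) : chZ a b = 0 :=
  if_neg fun h ↦ by omega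

lemma chZ_of_lt {a b : ℤ} (hab : a < b) : chZ a b = 0 :=
  if_neg fun h ↦ by omega

lemma sum_Icc_one_eq_sum_range {M : Type*} [AddCommMonoid M] (f : ℕ → M) (m : ℕ) :
    ∑ r ∈ Icc 1 m, f r = ∑ k ∈ range m, f (k + 1) := by
  rw [← Ico_add_one_right_eq_Icc, sum_Ico_eq_sum_range]
  simp [add_comm]

theorem alternating_sum_range_choose_mul_choose {n s m : ℕ} (hsn : s ≤ n) (hsm : s ≤ m) :
    ∑ k ∈ range (m + 1), (-1 : ℤ) ^ k * (k.choose s * (n + 1).choose k : ℕ) =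
      (-1) ^ m * ((n + 1).choose s * (n - s).choose (m - s) : ℕ) := by
  obtain ⟨j, rfl⟩ := Nat.exists_eq_add_of_le hsm
  have hlow : ∑ k ∈ range s, (-1 : ℤ) ^ k * (k.choose s * (n + 1).choose k : ℕ) = 0 :=
    sum_eq_zero fun k hk ↦ by rw [Nat.choose_eq_zero_of_lt (mem_range.1 hk)]; simp
  have hterm (i : ℕ) : (-1 : ℤ) ^ (s + i) * ((s + i).choose s * (n + 1).choose (s + i) : ℕ) =
      (-1) ^ s * (n + 1).choose s * ((-1) ^ i * (n - s + 1).choose i) := by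
    rw [mul_comm ((s + i).choose s), Nat.choose_mul (by omega), Nat.add_sub_cancel_left,
      show n + 1 - s = n - s + 1 by omega]
    push_cast
    ring
  rw [add_assoc, sum_range_add, hlow, zero_add, sum_congr rfl fun i _ ↦ hterm i,
    ← mul_sum, Int.alternating_sum_range_choose_eq_choose, Nat.add_sub_cancel_left]
  push_cast
  ring

theorem stmt_15_general (n m p : ℕ) (hmn : m < n) (hp : 1 ≤ p) :
    ∑ r ∈ Finset.Icc 1 n,
        (-1 : ℤ) ^ r * ((r - 1).choose (p - 1) : ℤ) *
          (if r ≤ m then ((n - 1).choose (r - 1) : ℤ) else 0) =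
      ((n - 1).choose (p - 1) : ℤ) *
        ((-1 : ℤ) ^ m * chZ ((n : ℤ) - p - 1) ((m : ℤ) - p) -
          chZ ((n : ℤ) - p - 1) ((n : ℤ) - 1)) := by
  rw [chZ_of_lt (show (n : ℤ) - p - 1 < n - 1 by omega), sub_zero]
  have htrunc : ∑ r ∈ Icc 1 n, (-1 : ℤ) ^ r * ((r - 1).choose (p - 1) : ℤ) *
      (if r ≤ m then ((n - 1).choose (r - 1) : ℤ) else 0) =
      -∑ k ∈ range m, (-1 : ℤ) ^ k * (k.choose (p - 1) * (n - 1).choose k : ℕ) := by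
    simp_rw [mul_ite, mul_zero, ← sum_filter]
    rw [show (Icc 1 n).filter (· ≤ m) = Icc 1 m by ext r; simp; omega,
      sum_Icc_one_eq_sum_range, ← sum_neg_distrib]
    refine sum_congr rfl fun k _ ↦ ?_
    push_cast
    ring
  rw [htrunc]
  rcases lt_or_ge m p with hmp | hpm
  · rw [chZ_of_neg (by omega), sum_eq_zero fun k hk ↦ ?_]
    · simp
    · rw [Nat.choose_eq_zero_of_lt (by simp at hk; omega)]; simp
  · obtain ⟨s, rfl⟩ : ∃ s, p = s + 1 := ⟨p - 1, by omega⟩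
    obtain ⟨t, rfl⟩ : ∃ t, m = t + 1 := ⟨m - 1, by omega⟩
    obtain ⟨N, rfl⟩ : ∃ N, n = N + 2 := ⟨n - 2, by omega⟩
    rw [Nat.add_sub_cancel, show N + 2 - 1 = N + 1 from rfl,
      show ((N + 2 : ℕ) : ℤ) - (s + 1 : ℕ) - 1 = (N - s : ℕ) by omega,
      show ((t + 1 : ℕ) : ℤ) - (s + 1 : ℕ) = (t - s : ℕ) by omega, chZ_natCast,
      alternating_sum_range_choose_mul_choose (by omega) (by omega)]
    push_cast
    ring

/-- For `q = 0`, `n > m ≥ 0` and `1 ≤ p ≤ n`: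
`∑_{r=1}^{n} (-1)^r C(r-1, p-1) h_m(n, 0, r)
  = C(n-1, p-1) [(-1)^m C(n-p-1, m-p) - C(n-p-1, n-1)]`,
where `h_m(n, 0, r) = C(n-1, r-1)` if `r ≤ m` and `0` if `r > m`, and the binomial
coefficients obey the convention `C(a, b) = 0` when `b < 0` or `b > a`. -/
theorem stmt_15 (n m p : ℕ) (hmn : m < n) (hp : 1 ≤ p) (hpn : p ≤ n) :
    ∑ r ∈ Finset.Icc 1 n,
        (-1 : ℤ) ^ r * ((r - 1).choose (p - 1) : ℤ) *
          (if r ≤ m then ((n - 1).choose (r - 1) : ℤ) else 0) =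
      ((n - 1).choose (p - 1) : ℤ) *
        ((-1 : ℤ) ^ m * chZ ((n : ℤ) - p - 1) ((m : ℤ) - p) -
          chZ ((n : ℤ) - p - 1) ((n : ℤ) - 1)) :=
  stmt_15_general n m p hmn hp
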